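/- arXiv:1008.4852 — 5 statements merged into one kernel-verified Lean document; each statement's English description precedes it below -/
import Mathlib

section
/- Let X be a topological space and let G ⊆ X be a dense subset such that the singleton {t} is closed in X for every t ∈ G. Then for every open subset V ⊆ X, the boundary, computed in the subspace topology of G, of the set cl_G(V ∩ G) equals ∂_X(cl_X(V)) ∩ G; that is, ∂_G( cl_G(V ∩ G) ) = ∂_X( cl_X(V) ) ∩ G. -/
/-!
Both `closure` and `interior` commute with taking preimages under the inclusion of a dense
subspace, the former on open sets (the dense subspace meets every open set densely) and the
latter, by complementation, on closed sets. Hence so does `frontier` on the closed set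
`closure V`.
-/

open Set

namespace Topology.IsInducing

variable {X Y : Type*} [TopologicalSpace X] [TopologicalSpace Y] {f : Y → X}

theorem closure_preimage_of_isOpen (hf : IsInducing f) (hd : DenseRange f) {V : Set X}
    (hV : IsOpen V) : closure (f ⁻¹' V) = f ⁻¹' closure V := by
  have hclosure : closure (f '' (f ⁻¹' V)) = closure V :=
    (closure_mono (image_preimage_subset f V)).antisymm
      (closure_minimal (hd.subset_closure_image_preimage_of_isOpen hV) isClosed_closure)
  rw [hf.closure_eq_preimage_closure_image, hclosure]

theorem interior_preimage_of_isClosed (hf : IsInducing f) (hd : DenseRange f) {s : Set X}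
    (hs : IsClosed s) : interior (f ⁻¹' s) = f ⁻¹' interior s := by
  rw [interior_eq_compl_closure_compl, ← preimage_compl,
    hf.closure_preimage_of_isOpen hd hs.isOpen_compl, ← preimage_compl, closure_compl, compl_compl]

theorem frontier_preimage_of_isClosed (hf : IsInducing f) (hd : DenseRange f) {s : Set X}
    (hs : IsClosed s) : frontier (f ⁻¹' s) = f ⁻¹' frontier s := by
  rw [(hs.preimage hf.continuous).frontier_eq, hs.frontier_eq,
    hf.interior_preimage_of_isClosed hd hs, preimage_sdiff]

end Topology.IsInducing

theorem stmt_3_general (X : Type*) [TopologicalSpace X] (G : Set X)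
    (hGdense : Dense G)
    (V : Set X) (hV : IsOpen V) :
    Subtype.val '' frontier (closure ((Subtype.val : G → X) ⁻¹' V)) =
      frontier (closure V) ∩ G := by
  have hval : Topology.IsInducing (Subtype.val : G → X) := .subtypeVal
  have hdense : DenseRange (Subtype.val : G → X) := hGdense.denseRange_val
  rw [hval.closure_preimage_of_isOpen hdense hV,
    hval.frontier_preimage_of_isClosed hdense isClosed_closure, Subtype.image_preimage_coe,
    inter_comm]

/-- Lemma 4.5(iii): If `G` is a dense subset of a topological space `X` consisting of closed
points, then for every open `V ⊆ X`, the boundary in the subspace `G` of the set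
`cl_G(V ∩ G)` equals `∂_X(cl_X(V)) ∩ G`. -/
theorem stmt_3 (X : Type*) [TopologicalSpace X] (G : Set X)
    (hGdense : Dense G) (hGclosed : ∀ t ∈ G, IsClosed ({t} : Set X))
    (V : Set X) (hV : IsOpen V) :
    Subtype.val '' frontier (closure ((Subtype.val : G → X) ⁻¹' V)) =
      frontier (closure V) ∩ G :=
  stmt_3_general X G hGdense V hV
end

section
/- Let X be a second countable, locally compact Hausdorff topological space with no isolated points. Then every nonempty open subset O ⊆ X contains a nonempty open subset U ⊆ O (open in X) whose boundary in X is nonempty, i.e., whose closure in X is not open. -/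
/-!
If every nonempty open `U ⊆ O` had open closure, any two disjoint open subsets of `O` would have
disjoint closures. But `X` is metrizable, so a non-isolated point `x ∈ O` is the limit of points
`y n ∈ O` whose distances to `x` strictly decrease; the shells between every other of these
distances are pairwise disjoint open sets, and the unions of the even and of the odd shells are
disjoint open subsets of `O` both having `x` in their closure.
-/

open Set Filter Topology Function

theorem not_isOpen_closure_of_disjoint {X : Type*} [TopologicalSpace X] {U W : Set X} {x : X}
    (hW : IsOpen W) (hUW : Disjoint U W) (hxU : x ∈ closure U) (hxW : x ∈ closure W) :
    ¬IsOpen (closure U) := fun hU =>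
  (mem_closure_iff.1 hxW _ hU hxU).not_disjoint (hUW.closure_left hW)

theorem not_isOpen_closure_iUnion_even {X : Type*} [TopologicalSpace X] {V : ℕ → Set X}
    {y : ℕ → X} {x : X} (hV : ∀ n, IsOpen (V n)) (hVd : Pairwise (Disjoint on V))
    (hy : ∀ n, y n ∈ V n) (hlim : Tendsto y atTop (𝓝 x)) :
    ¬IsOpen (closure (⋃ n, V (2 * n))) := by
  have hx_closure (k : ℕ) : x ∈ closure (⋃ n, V (2 * n + k)) :=
    mem_closure_of_tendsto
      (hlim.comp (tendsto_atTop_mono (fun n => show n ≤ 2 * n + k by omega) tendsto_id))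
      (Eventually.of_forall fun n => mem_iUnion.2 ⟨n, hy _⟩)
  refine not_isOpen_closure_of_disjoint (W := ⋃ n, V (2 * n + 1)) (isOpen_iUnion fun n => hV _)
    (disjoint_iUnion_left.2 fun m => disjoint_iUnion_right.2 fun n => hVd (by omega))
    (hx_closure 0) (hx_closure 1)

theorem exists_pairwise_disjoint_open_seq_tendsto {X : Type*} [MetricSpace X] {O : Set X} {x : X}
    (hO : IsOpen O) (hx : x ∈ O) [(𝓝[≠] x).NeBot] :
    ∃ (V : ℕ → Set X) (y : ℕ → X), (∀ n, IsOpen (V n) ∧ V n ⊆ O ∧ y n ∈ V n) ∧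
      Pairwise (Disjoint on V) ∧ Tendsto y atTop (𝓝 x) := by
  have near (b : ℝ) (hb : 0 < b) : ∃ y ∈ O \ {x}, dist y x < b := by
    have hmem : O ∩ Metric.ball x b ∈ 𝓝[≠] x :=
      nhdsWithin_le_nhds (inter_mem (hO.mem_nhds hx) (Metric.ball_mem_nhds x hb))
    obtain ⟨y, ⟨hyO, hyb⟩, hyx⟩ := Filter.nonempty_of_mem (inter_mem hmem self_mem_nhdsWithin)
    exact ⟨y, ⟨hyO, hyx⟩, hyb⟩
  set D := (dist · x) '' (O \ {x})
  have hD : IsGLB D 0 := by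
    refine ⟨?_, fun b hb => not_lt.1 fun hb0 => ?_⟩
    · rintro _ ⟨y, -, rfl⟩
      exact dist_nonneg
    · obtain ⟨y, hy, hyb⟩ := near b hb0
      exact (hb ⟨y, hy, rfl⟩).not_gt hyb
  have h0 : (0 : ℝ) ∉ D := by
    rintro ⟨y, ⟨-, hyx⟩, hy⟩
    exact hyx (dist_eq_zero.1 hy)
  obtain ⟨y₀, hy₀, -⟩ := near 1 one_pos
  obtain ⟨d, hd_anti, -, hd_lim, hdD⟩ :=
    hD.exists_seq_strictAnti_tendsto_of_notMem h0 ⟨_, y₀, hy₀, rfl⟩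
  choose y hy hyd using hdD
  -- the shell between `d (2n+2)` and `d (2n)` contains `y (2n+1)`
  refine ⟨fun n => O ∩ (dist · x) ⁻¹' Ioo (d (2 * n + 2)) (d (2 * n)), fun n => y (2 * n + 1),
    fun n => ⟨hO.inter (isOpen_Ioo.preimage (by fun_prop)), inter_subset_left,
      (hy _).1, by simp only [mem_preimage, hyd]; exact ⟨hd_anti (by omega), hd_anti (by omega)⟩⟩,
    fun i j hij => ?_, ?_⟩
  · have := (hd_anti.antitone.comp_monotone fun _ _ h => Nat.mul_le_mul_left 2 h)
      |>.pairwise_disjoint_on_Ioo_succ hij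
    exact (this.preimage _).mono inter_subset_right inter_subset_right
  · rw [tendsto_iff_dist_tendsto_zero]
    simp only [hyd]
    exact hd_lim.comp (tendsto_atTop_mono (fun n => show n ≤ 2 * n + 1 by omega) tendsto_id)

/-- In a second countable, locally compact Hausdorff space with no isolated points, every
nonempty open subset `O` contains a nonempty open subset `U` whose closure is not open
(equivalently, whose boundary is nonempty). -/
theorem stmt_5 (X : Type*) [TopologicalSpace X] [SecondCountableTopology X]
    [LocallyCompactSpace X] [T2Space X]
    (hX : ∀ x : X, ¬ IsOpen ({x} : Set X)) :
    ∀ O : Set X, IsOpen O → O.Nonempty →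
      ∃ U : Set X, IsOpen U ∧ U ⊆ O ∧ U.Nonempty ∧ ¬ IsOpen (closure U) := by
  rintro O hO ⟨x, hx⟩
  let := TopologicalSpace.metrizableSpaceMetric X
  have : (𝓝[≠] x).NeBot := ⟨fun h => hX x ((isOpen_singleton_iff_punctured_nhds x).2 h)⟩
  obtain ⟨V, y, hV, hVd, hy⟩ := exists_pairwise_disjoint_open_seq_tendsto hO hx
  exact ⟨⋃ n, V (2 * n), isOpen_iUnion fun n => (hV _).1, iUnion_subset fun n => (hV _).2.1,
    ⟨y 0, mem_iUnion.2 ⟨0, (hV 0).2.2⟩⟩,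
    not_isOpen_closure_iUnion_even (fun n => (hV n).1) hVd (fun n => (hV n).2.2) hy⟩
end

section
/- Let X be a nonempty second countable, locally compact Hausdorff topological space. Then X has no isolated points if and only if X contains a dense G_δ subset with empty interior. -/
/-! The complement of a countable dense set `S` is a `Gδ` set with empty interior. When no point
is isolated, each `{x}ᶜ` is a dense open set, so by the Baire category theorem
`Sᶜ = ⋂ x ∈ S, {x}ᶜ` is dense. Conversely, an isolated point lies in every dense set `D`, and
then in its interior. -/

open Set TopologicalSpace

section

variable {X : Type*} [TopologicalSpace X]

theorem Set.Countable.dense_compl_of_forall_not_isOpen_singleton [T1Space X] [BaireSpace X]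
    (h : ∀ x : X, ¬IsOpen ({x} : Set X)) {S : Set X} (hS : S.Countable) : Dense Sᶜ := by
  rw [← biUnion_of_singleton S, compl_iUnion₂]
  exact dense_biInter_of_isOpen (fun x _ => isOpen_compl_singleton) hS
    (fun x _ => dense_compl_singleton_iff_not_open.2 (h x))

theorem exists_isGδ_dense_interior_eq_empty [SeparableSpace X] [T1Space X] [BaireSpace X]
    (h : ∀ x : X, ¬IsOpen ({x} : Set X)) : ∃ D : Set X, IsGδ D ∧ Dense D ∧ interior D = ∅ := by
  obtain ⟨S, hSc, hSd⟩ := exists_countable_dense X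
  refine ⟨Sᶜ, hSc.isGδ_compl, hSc.dense_compl_of_forall_not_isOpen_singleton h, ?_⟩
  rwa [interior_eq_empty_iff_dense_compl, compl_compl]

theorem not_isOpen_singleton_of_dense_of_interior_eq_empty {D : Set X} (hD : Dense D)
    (hDi : interior D = ∅) (x : X) : ¬IsOpen ({x} : Set X) := by
  intro hx
  have hxD : x ∈ D :=
    singleton_inter_nonempty.1 (hD.inter_open_nonempty {x} hx (singleton_nonempty x))
  have hx_int : x ∈ interior D :=
    interior_mono (singleton_subset_iff.2 hxD) (hx.interior_eq.symm ▸ mem_singleton x)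
  simp [hDi] at hx_int

end

theorem stmt_6_general (X : Type*) [TopologicalSpace X] [SecondCountableTopology X]
    [LocallyCompactSpace X] [T2Space X] :
    (∀ x : X, ¬ IsOpen ({x} : Set X)) ↔
      ∃ D : Set X, IsGδ D ∧ Dense D ∧ interior D = ∅ :=
  ⟨exists_isGδ_dense_interior_eq_empty,
    fun ⟨_, _, hD, hDi⟩ => not_isOpen_singleton_of_dense_of_interior_eq_empty hD hDi⟩

/-- Remark 3.4: A nonempty second countable, locally compact Hausdorff space has no
isolated points if and only if it contains a dense `Gδ` subset with empty interior. -/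
theorem stmt_6 (X : Type*) [TopologicalSpace X] [SecondCountableTopology X]
    [LocallyCompactSpace X] [T2Space X] [Nonempty X] :
    (∀ x : X, ¬ IsOpen ({x} : Set X)) ↔
      ∃ D : Set X, IsGδ D ∧ Dense D ∧ interior D = ∅ :=
  stmt_6_general X
end

section
/- Let X be a topological space, let U ⊆ X be open, and let V ⊆ X be open with cl(V) ⊆ U. Suppose that cl(V) is not open in X. Then for every ε with 0 < ε < 1/2 there is no continuous function f : U → ℝ (U with the subspace topology) satisfying f(t) ≥ 1 − ε for all t ∈ V and f(t) ≤ ε for all t ∈ U \ cl(V). -/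
/-!
Since `cl V` is closed but not open, its frontier contains a point `x`, which lies in `U` and is
a limit both of points of `V` and of points of `U \ cl V` (here `U` being open matters). By
continuity `1 - ε ≤ f x ≤ ε`, contradicting `ε < 1/2`.
-/

open Set

theorem frontier_nonempty_of_not_isOpen {X : Type*} [TopologicalSpace X] {s : Set X}
    (hs : ¬IsOpen s) : (frontier s).Nonempty :=
  nonempty_iff_ne_empty.2 fun h => hs (isClopen_iff_frontier_eq_empty.2 h).isOpen

theorem IsOpen.mem_closure_preimage_val {X : Type*} [TopologicalSpace X] {U : Set X}
    (hU : IsOpen U) {s : Set X} {x : U} :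
    x ∈ closure (Subtype.val ⁻¹' s) ↔ (x : X) ∈ closure s := by
  rw [← hU.isOpenMap_subtype_val.preimage_closure_eq_closure_preimage continuous_subtype_val]
  rfl

theorem Continuous.le_of_mem_closure_inter_closure {Y α : Type*} [TopologicalSpace Y]
    [TopologicalSpace α] [Preorder α] [OrderClosedTopology α] {f : Y → α} (hf : Continuous f)
    {s t : Set Y} {a b : α} (ha : ∀ y ∈ s, a ≤ f y) (hb : ∀ y ∈ t, f y ≤ b) {y : Y}
    (hys : y ∈ closure s) (hyt : y ∈ closure t) : a ≤ b :=
  (le_on_closure ha continuousOn_const hf.continuousOn hys).trans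
    (le_on_closure hb hf.continuousOn continuousOn_const hyt)

theorem stmt_7_general (X : Type*) [TopologicalSpace X] (U V : Set X)
    (hU : IsOpen U) (hVU : closure V ⊆ U)
    (hnotopen : ¬ IsOpen (closure V))
    (ε : ℝ) (hε : ε < 1 / 2) :
    ¬ ∃ f : U → ℝ, Continuous f ∧
        (∀ t : U, (t : X) ∈ V → 1 - ε ≤ f t) ∧
        (∀ t : U, (t : X) ∉ closure V → f t ≤ ε) := by
  rintro ⟨f, hf, hfV, hfW⟩
  obtain ⟨x, hx⟩ := frontier_nonempty_of_not_isOpen hnotopen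
  rw [frontier_eq_closure_inter_closure, closure_closure] at hx
  obtain ⟨hxV, hxW⟩ := hx
  have hε' : (1 : ℝ) - ε ≤ ε :=
    hf.le_of_mem_closure_inter_closure (s := Subtype.val ⁻¹' V)
      (t := Subtype.val ⁻¹' (closure V)ᶜ) (y := ⟨x, hVU hxV⟩) hfV hfW
      (hU.mem_closure_preimage_val.2 hxV) (hU.mem_closure_preimage_val.2 hxW)
  linarith

/-- Key step of Theorem 3.3: if `U` is open, `V` is open with `cl(V) ⊆ U` and `cl(V)` not
open, then for `0 < ε < 1/2` there is no continuous `f : U → ℝ` with `f ≥ 1 - ε` on `V`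
and `f ≤ ε` on `U \ cl(V)`. -/
theorem stmt_7 (X : Type*) [TopologicalSpace X] (U V : Set X)
    (hU : IsOpen U) (hV : IsOpen V) (hVU : closure V ⊆ U)
    (hnotopen : ¬ IsOpen (closure V))
    (ε : ℝ) (hε0 : 0 < ε) (hε : ε < 1 / 2) :
    ¬ ∃ f : U → ℝ, Continuous f ∧
        (∀ t : U, (t : X) ∈ V → 1 - ε ≤ f t) ∧
        (∀ t : U, (t : X) ∉ closure V → f t ≤ ε) :=
  stmt_7_general X U V hU hVU hnotopen ε hε
end

section
/- Let X be a second countable, locally compact Hausdorff topological space with no isolated points. Then for every nonempty open subset V' ⊆ X there exists a nonempty open subset V ⊆ X such that cl(V) ⊆ V' and cl(V) is not open in X. -/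
/-!
Since `X` is metrizable, a non-isolated point `x ∈ V'` is the limit of points `z n ≠ x` whose
distances to `x` strictly decrease. Separating the odd-indexed distances by the even-indexed ones
gives pairwise disjoint open annuli around `z (2n+1)`; the unions of every other annulus are two
disjoint open sets `U`, `W` both accumulating at `x`. Shrinking `U` into a closed neighbourhood of
`x` inside `V'` gives `V`: its closure contains `x`, but every neighbourhood of `x` meets `W`,
which is disjoint from `closure V`.
-/

open Filter Function Set Topology

theorem not_isOpen_closure_of_disjoint_of_mem_closure {X : Type*} [TopologicalSpace X]
    {x : X} {U W : Set X} (hW : IsOpen W) (hUW : Disjoint U W) (hxU : x ∈ closure U)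
    (hxW : x ∈ closure W) : ¬ IsOpen (closure U) := fun hU =>
  have hmeet : (closure U ∩ W).Nonempty := mem_closure_iff_nhds.1 hxW _ (hU.mem_nhds hxU)
  hmeet.ne_empty (hUW.closure_left hW).inter_eq

theorem exists_isOpen_disjoint_mem_closure_of_tendsto {X : Type*} [TopologicalSpace X]
    {x : X} {z : ℕ → X} (hz : Tendsto z atTop (𝓝 x)) {O : ℕ → Set X}
    (hO : ∀ n, IsOpen (O n)) (hdisj : Pairwise (Disjoint on O)) (hzO : ∀ n, z n ∈ O n) :
    ∃ U W : Set X, IsOpen U ∧ IsOpen W ∧ Disjoint U W ∧ x ∈ closure U ∧ x ∈ closure W := by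
  refine ⟨⋃ n, O (2 * n), ⋃ n, O (2 * n + 1), isOpen_iUnion fun n => hO _,
    isOpen_iUnion fun n => hO _, ?_, ?_, ?_⟩
  · exact disjoint_iUnion_left.2 fun n => disjoint_iUnion_right.2 fun m => hdisj (by omega)
  · have hsub : Tendsto (fun n => 2 * n) atTop atTop :=
      StrictMono.tendsto_atTop fun a b h => by omega
    exact mem_closure_of_tendsto (hz.comp hsub)
      (Eventually.of_forall fun n => mem_iUnion_of_mem n (hzO _))
  · have hsub : Tendsto (fun n => 2 * n + 1) atTop atTop :=
      StrictMono.tendsto_atTop fun a b h => by omega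
    exact mem_closure_of_tendsto (hz.comp hsub)
      (Eventually.of_forall fun n => mem_iUnion_of_mem n (hzO _))

theorem exists_isOpen_closure_subset_not_isOpen_closure {X : Type*} [TopologicalSpace X]
    [RegularSpace X] {x : X} {U W : Set X} (hU : IsOpen U) (hW : IsOpen W) (hUW : Disjoint U W)
    (hxU : x ∈ closure U) (hxW : x ∈ closure W) {V' : Set X} (hV' : V' ∈ 𝓝 x) :
    ∃ V : Set X, IsOpen V ∧ V.Nonempty ∧ closure V ⊆ V' ∧ ¬ IsOpen (closure V) := by
  obtain ⟨C, hC, hCclosed, hCV'⟩ := exists_mem_nhds_isClosed_subset hV'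
  have hxV : x ∈ closure (interior C ∩ U) :=
    isOpen_interior.inter_closure ⟨mem_interior_iff_mem_nhds.2 hC, hxU⟩
  refine ⟨interior C ∩ U, isOpen_interior.inter hU, closure_nonempty_iff.1 ⟨x, hxV⟩, ?_,
    not_isOpen_closure_of_disjoint_of_mem_closure hW (hUW.mono_left inter_subset_right) hxV hxW⟩
  exact (closure_minimal (inter_subset_left.trans interior_subset) hCclosed).trans hCV'

namespace Metric

variable {X : Type*} [MetricSpace X] {x : X}

theorem exists_seq_tendsto_strictAnti_dist (hx : ¬ IsOpen ({x} : Set X)) :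
    ∃ z : ℕ → X, StrictAnti (fun n => dist (z n) x) ∧ Tendsto z atTop (𝓝 x) := by
  simp only [isOpen_singleton_iff, not_exists, not_and, not_forall] at hx
  set t := (fun y => dist y x) '' {x}ᶜ
  have hglb : IsGLB t 0 := by
    refine ⟨forall_mem_image.2 fun y _ => dist_nonneg, fun b hb => le_of_not_gt fun hb0 => ?_⟩
    obtain ⟨y, hyx, hne⟩ := hx b hb0
    exact (hb (mem_image_of_mem _ hne)).not_gt hyx
  have hnotMem : (0 : ℝ) ∉ t := fun ⟨y, hy, h0⟩ => hy (dist_eq_zero.1 h0)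
  have hne : t.Nonempty := by
    obtain ⟨y, -, hy⟩ := hx 1 one_pos
    exact ⟨_, mem_image_of_mem _ hy⟩
  obtain ⟨u, hu, -, hu0, hut⟩ := hglb.exists_seq_strictAnti_tendsto_of_notMem hnotMem hne
  choose z hz using hut
  have hdist : (fun n => dist (z n) x) = u := funext fun n => (hz n).2
  exact ⟨z, hdist ▸ hu, tendsto_iff_dist_tendsto_zero.2 (hdist ▸ hu0)⟩

theorem exists_isOpen_disjoint_mem_closure (hx : ¬ IsOpen ({x} : Set X)) :
    ∃ U W : Set X, IsOpen U ∧ IsOpen W ∧ Disjoint U W ∧ x ∈ closure U ∧ x ∈ closure W := by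
  obtain ⟨z, hd, hz⟩ := exists_seq_tendsto_strictAnti_dist hx
  set d := fun n => dist (z n) x
  have hcont : Continuous fun y => dist y x := continuous_id.dist continuous_const
  have hsub : Tendsto (fun n => 2 * n + 1) atTop atTop :=
    StrictMono.tendsto_atTop fun a b h => by omega
  refine exists_isOpen_disjoint_mem_closure_of_tendsto (hz.comp hsub)
    (O := fun n => (fun y => dist y x) ⁻¹' Ioo (d (2 * (n + 1))) (d (2 * n)))
    (fun n => isOpen_Ioo.preimage hcont) ?_ fun n => ⟨hd (show 2 * n + 1 < 2 * (n + 1) by omega),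
      hd (show 2 * n < 2 * n + 1 by omega)⟩
  have hanti : Antitone fun n => d (2 * n) := fun m n h => hd.antitone (by omega)
  exact fun m n hmn => (hanti.pairwise_disjoint_on_Ioo_succ hmn).preimage _

end Metric

/-- Selection step of Theorem 3.3: in a second countable, locally compact Hausdorff space
with no isolated points, every nonempty open subset `V'` contains the closure of a
nonempty open subset `V` whose closure is not open. -/
theorem stmt_9 (X : Type*) [TopologicalSpace X] [SecondCountableTopology X]
    [LocallyCompactSpace X] [T2Space X]
    (hX : ∀ x : X, ¬ IsOpen ({x} : Set X)) :
    ∀ V' : Set X, IsOpen V' → V'.Nonempty →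
      ∃ V : Set X, IsOpen V ∧ V.Nonempty ∧ closure V ⊆ V' ∧ ¬ IsOpen (closure V) := by
  rintro V' hV' ⟨x, hx⟩
  let _ : MetricSpace X := TopologicalSpace.metrizableSpaceMetric X
  obtain ⟨U, W, hU, hW, hUW, hxU, hxW⟩ := Metric.exists_isOpen_disjoint_mem_closure (hX x)
  exact exists_isOpen_closure_subset_not_isOpen_closure hU hW hUW hxU hxW (hV'.mem_nhds hx)
end
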